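/- For n, m ≥ 2, the vector space of linear S_n × S_m-equivariant maps T : ℝ^{n×m} → ℝ^{n×m} (under the row-and-column permutation action) has dimension exactly 4. -/

import Mathlib

/-- The subspace of linear maps `ℝ^{n×m} → ℝ^{n×m}` equivariant to the
row-and-column permutation action of `S_n × S_m`. -/
noncomputable def equivariantMaps (n m : ℕ) :
    Submodule ℝ (Matrix (Fin n) (Fin m) ℝ →ₗ[ℝ] Matrix (Fin n) (Fin m) ℝ) where
  carrier := {T | ∀ (σ : Equiv.Perm (Fin n)) (τ : Equiv.Perm (Fin m))
      (X : Matrix (Fin n) (Fin m) ℝ),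
    T (fun j k => X (σ⁻¹ j) (τ⁻¹ k)) = fun j k => T X (σ⁻¹ j) (τ⁻¹ k)}
  add_mem' := by
    intro T S hT hS σ τ X
    have h1 := hT σ τ X
    have h2 := hS σ τ X
    funext j k
    exact congrArg₂ (· + ·) (congrFun (congrFun h1 j) k) (congrFun (congrFun h2 j) k)
  zero_mem' := by
    intro σ τ X
    rfl
  smul_mem' := by
    intro c T hT σ τ X
    have h1 := hT σ τ X
    funext j k
    exact congrArg (c • ·) (congrFun (congrFun h1 j) k)
  

/-!
A linear map `T` on `n × m` matrices is determined by the numbers `T (E j' k') j k`, and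
equivariance makes them constant on the orbits of `S_n × S_m` on pairs of positions
`((j, k), (j', k'))`. Since `S_n` acts transitively on ordered pairs of distinct points, for
`n, m ≥ 2` these orbits are exactly the four classes recording whether `j = j'` and whether
`k = k'`. Conversely every function `c` of these two bits gives an equivariant map
`orbitMap c`, and `c` is recovered from `orbitMap c`; hence the space is isomorphic to
`Bool × Bool → ℝ`.
-/

theorem Equiv.Perm.exists_apply_eq_and_apply_eq {α : Type*} [DecidableEq α] {a b c d : α}
    (h : a = b ↔ c = d) : ∃ σ : Perm α, σ a = c ∧ σ b = d := by
  by_cases hab : a = b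
  · subst hab
    exact ⟨swap a c, swap_apply_left a c, by rw [swap_apply_left, h.mp rfl]⟩
  · have hcd : c ≠ d := mt h.mpr hab
    have hc : c ≠ swap a c b := fun hcb => hab (by simpa using congrArg (swap a c) hcb)
    exact ⟨swap (swap a c b) d * swap a c, by simp [swap_apply_of_ne_of_ne hc hcd], by simp⟩

theorem exists_decide_eq {α : Type*} [DecidableEq α] [Nontrivial α] (p : Bool) :
    ∃ x y : α, decide (x = y) = p := by
  obtain ⟨x, y, hxy⟩ := exists_pair_ne α
  cases p
  · exact ⟨x, y, by simpa using hxy⟩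
  · exact ⟨x, x, by simp⟩

section OrbitMap

variable {ι κ R : Type*} [Fintype ι] [Fintype κ] [DecidableEq ι] [DecidableEq κ] [CommSemiring R]

theorem LinearMap.apply_apply_eq_sum_single (T : Matrix ι κ R →ₗ[R] Matrix ι κ R)
    (X : Matrix ι κ R) (j : ι) (k : κ) :
    T X j k = ∑ j', ∑ k', X j' k' * T (Matrix.single j' k' 1) j k := by
  have hsingle (j' : ι) (k' : κ) :
      Matrix.single j' k' (X j' k') = X j' k' • Matrix.single j' k' 1 := by
    simp [Matrix.smul_single]
  conv_lhs => rw [Matrix.matrix_eq_sum_single X]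
  simp only [hsingle, map_sum, map_smul, Matrix.sum_apply, Matrix.smul_apply, smul_eq_mul]

variable (ι κ R) in
noncomputable def orbitMap :
    (Bool × Bool → R) →ₗ[R] Matrix ι κ R →ₗ[R] Matrix ι κ R :=
  LinearMap.mk₂ R
    (fun c X => Matrix.of fun j k => ∑ j', ∑ k', c (decide (j = j'), decide (k = k')) * X j' k')
    (fun _ _ _ => by ext; simp [add_mul, Finset.sum_add_distrib])
    (fun _ _ _ => by ext; simp [mul_assoc, Finset.mul_sum])
    (fun _ _ _ => by ext; simp [mul_add, Finset.sum_add_distrib])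
    (fun _ _ _ => by ext; simp [mul_left_comm, Finset.mul_sum])

theorem orbitMap_apply (c : Bool × Bool → R) (X : Matrix ι κ R) (j : ι) (k : κ) :
    orbitMap ι κ R c X j k = ∑ j', ∑ k', c (decide (j = j'), decide (k = k')) * X j' k' := rfl

theorem orbitMap_single_apply (c : Bool × Bool → R) (j j' : ι) (k k' : κ) :
    orbitMap ι κ R c (Matrix.single j' k' 1) j k = c (decide (j = j'), decide (k = k')) := by
  simp [orbitMap_apply, Matrix.single_apply, ite_and, Finset.sum_ite_irrel]

theorem orbitMap_injective [Nontrivial ι] [Nontrivial κ] :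
    Function.Injective (orbitMap ι κ R) := by
  intro c c' h
  funext ⟨a, b⟩
  obtain ⟨j, j', rfl⟩ := exists_decide_eq (α := ι) a
  obtain ⟨k, k', rfl⟩ := exists_decide_eq (α := κ) b
  simpa only [orbitMap_single_apply] using congrArg (fun T => T (Matrix.single j' k' 1) j k) h

end OrbitMap

theorem orbitMap_mem_equivariantMaps {n m : ℕ} (c : Bool × Bool → ℝ) :
    orbitMap (Fin n) (Fin m) ℝ c ∈ equivariantMaps n m := by
  intro σ τ X
  funext j k
  simp only [orbitMap_apply]
  refine Fintype.sum_equiv σ⁻¹ _ _ fun j' => Fintype.sum_equiv τ⁻¹ _ _ fun k' => ?_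
  simp

namespace equivariantMaps

variable {n m : ℕ} {T : Matrix (Fin n) (Fin m) ℝ →ₗ[ℝ] Matrix (Fin n) (Fin m) ℝ}

theorem apply_single_perm (hT : T ∈ equivariantMaps n m) (σ : Equiv.Perm (Fin n))
    (τ : Equiv.Perm (Fin m)) (j j' : Fin n) (k k' : Fin m) :
    T (Matrix.single (σ j') (τ k') 1) (σ j) (τ k) = T (Matrix.single j' k' 1) j k := by
  have hsingle : (fun a b => Matrix.single j' k' (1 : ℝ) (σ⁻¹ a) (τ⁻¹ b)) =
      Matrix.single (σ j') (τ k') 1 := by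
    ext a b
    simp [Matrix.single_apply, Equiv.eq_symm_apply]
  have h := congrFun (congrFun (hT σ τ (Matrix.single j' k' 1)) (σ j)) (τ k)
  rw [hsingle] at h
  simpa using h

theorem apply_single_eq_of_iff (hT : T ∈ equivariantMaps n m) {j₁ j₁' j₂ j₂' : Fin n}
    {k₁ k₁' k₂ k₂' : Fin m} (hj : j₁ = j₁' ↔ j₂ = j₂') (hk : k₁ = k₁' ↔ k₂ = k₂') :
    T (Matrix.single j₁' k₁' 1) j₁ k₁ = T (Matrix.single j₂' k₂' 1) j₂ k₂ := by
  obtain ⟨σ, rfl, rfl⟩ := Equiv.Perm.exists_apply_eq_and_apply_eq hj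
  obtain ⟨τ, rfl, rfl⟩ := Equiv.Perm.exists_apply_eq_and_apply_eq hk
  exact (apply_single_perm hT σ τ _ _ _ _).symm

theorem exists_orbitMap_eq [Nontrivial (Fin n)] [Nontrivial (Fin m)]
    (hT : T ∈ equivariantMaps n m) : ∃ c, orbitMap (Fin n) (Fin m) ℝ c = T := by
  choose j j' hj using exists_decide_eq (α := Fin n)
  choose k k' hk using exists_decide_eq (α := Fin m)
  refine ⟨fun p => T (Matrix.single (j' p.1) (k' p.2) 1) (j p.1) (k p.2), ?_⟩
  ext X x y
  rw [orbitMap_apply, T.apply_apply_eq_sum_single]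
  refine Finset.sum_congr rfl fun x' _ => Finset.sum_congr rfl fun y' _ => ?_
  rw [mul_comm,
    apply_single_eq_of_iff hT (decide_eq_decide.mp (hj _)) (decide_eq_decide.mp (hk _))]

end equivariantMaps

noncomputable def orbitMapEquiv (n m : ℕ) [Nontrivial (Fin n)] [Nontrivial (Fin m)] :
    (Bool × Bool → ℝ) ≃ₗ[ℝ] equivariantMaps n m :=
  LinearEquiv.ofBijective
    ((orbitMap (Fin n) (Fin m) ℝ).codRestrict _ orbitMap_mem_equivariantMaps)
    ⟨fun _ _ h => orbitMap_injective (congrArg Subtype.val h),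
      fun T => (equivariantMaps.exists_orbitMap_eq T.2).imp fun _ h => Subtype.ext h⟩

/-- For `n, m ≥ 2`, the vector space of linear `S_n × S_m`-equivariant maps
`ℝ^{n×m} → ℝ^{n×m}` has dimension exactly 4. -/
theorem equivariantMaps_finrank (n m : ℕ) (hn : 2 ≤ n) (hm : 2 ≤ m) :
    Module.finrank ℝ (equivariantMaps n m) = 4 := by
  have : Nontrivial (Fin n) := Fin.nontrivial_iff_two_le.mpr hn
  have : Nontrivial (Fin m) := Fin.nontrivial_iff_two_le.mpr hm
  rw [← (orbitMapEquiv n m).finrank_eq]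
  simp
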